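/- arXiv:2005.04561 — 2 statements merged into one kernel-verified Lean document; each statement's English description precedes it below -/
import Mathlib

section
/- The matrix K has the strong Toeplitz-plus-Hankel property: for every function f : ℝ → ℝ, the matrix function f(K) := Σ_{k=1}^N f(λ_k) v_k v_k^⊤ can be written as f(K) = T + H, where T is a Toeplitz matrix (its (m,n) entry depends only on m−n) and H is a Hankel matrix (its (m,n) entry depends only on m+n). Explicitly, one may take T = Σ_{k=1}^N f(λ_k) T_k and H = Σ_{k=1}^N f(λ_k) H_k, with (T_k)_{m,n} = h cos((m−n) k π h) and (H_k)_{m,n} = −h cos((m+n) k π h). -/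
open Real Matrix

/-- λ_k = 2 − 2 cos(kπ/(N+1)), with k represented 1-based by `k.1 + 1`. -/
noncomputable def lam (N : ℕ) (k : Fin N) : ℝ :=
  2 - 2 * Real.cos ((k.1 + 1) * π / (N + 1))

/-- (v_k)_m = √(2h) sin(m k π h), h = 1/(N+1), with 1-based indices. -/
noncomputable def vvec (N : ℕ) (k : Fin N) : Fin N → ℝ :=
  fun m => Real.sqrt (2 / (N + 1)) * Real.sin ((m.1 + 1) * (k.1 + 1) * π / (N + 1))

/-- Toeplitz part: (T_k)_{m,n} = h cos((m−n) k π h), h = 1/(N+1). -/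
noncomputable def Tmat (N : ℕ) (k : Fin N) : Matrix (Fin N) (Fin N) ℝ :=
  fun m n => (1 / (N + 1)) * Real.cos (((m.1 : ℝ) - (n.1 : ℝ)) * (k.1 + 1) * π / (N + 1))

/-- Hankel part: (H_k)_{m,n} = −h cos((m+n) k π h), with 1-based m, n. -/
noncomputable def Hmat (N : ℕ) (k : Fin N) : Matrix (Fin N) (Fin N) ℝ :=
  fun m n => -(1 / (N + 1)) * Real.cos ((((m.1 : ℝ) + 1) + ((n.1 : ℝ) + 1)) * (k.1 + 1) * π / (N + 1))

/-- K has the strong Toeplitz-plus-Hankel property: for every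
f : ℝ → ℝ, the matrix function f(K) = Σ_k f(λ_k) v_k v_kᵀ equals T + H where
T = Σ_k f(λ_k) T_k is Toeplitz (entries depend only on m−n) and
H = Σ_k f(λ_k) H_k is Hankel (entries depend only on m+n). -/
theorem stmt4 (N : ℕ) (hN : 0 < N) (f : ℝ → ℝ) :
    ∃ T H : Matrix (Fin N) (Fin N) ℝ,
      (∀ m n m' n' : Fin N, (m.1 : ℤ) - (n.1 : ℤ) = (m'.1 : ℤ) - (n'.1 : ℤ) → T m n = T m' n') ∧
      (∀ m n m' n' : Fin N, m.1 + n.1 = m'.1 + n'.1 → H m n = H m' n') ∧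
      T = ∑ k : Fin N, f (lam N k) • Tmat N k ∧
      H = ∑ k : Fin N, f (lam N k) • Hmat N k ∧
      ∑ k : Fin N, f (lam N k) • vecMulVec (vvec N k) (vvec N k) = T + H := by
  refine ⟨∑ k : Fin N, f (lam N k) • Tmat N k, ∑ k : Fin N, f (lam N k) • Hmat N k,
    ?_, ?_, rfl, rfl, ?_⟩
  · intro m n m' n' hmn
    have h : (m.1 : ℝ) - n.1 = (m'.1 : ℝ) - n'.1 := by exact_mod_cast hmn
    simp only [Matrix.sum_apply, Matrix.smul_apply, Tmat, smul_eq_mul]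
    refine Finset.sum_congr rfl fun k _ => by rw [h]
  · intro m n m' n' hmn
    have h : ((m.1 : ℝ) + 1) + ((n.1 : ℝ) + 1) = ((m'.1 : ℝ) + 1) + ((n'.1 : ℝ) + 1) := by
      have : (m.1 : ℝ) + n.1 = (m'.1 : ℝ) + n'.1 := by exact_mod_cast hmn
      linarith
    simp only [Matrix.sum_apply, Matrix.smul_apply, Hmat, smul_eq_mul]
    refine Finset.sum_congr rfl fun k _ => by rw [h]
  · ext m n
    simp only [Matrix.sum_apply, Matrix.add_apply, Matrix.smul_apply, smul_eq_mul,
      vecMulVec_apply, Tmat, Hmat, vvec]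
    rw [← Finset.sum_add_distrib]
    refine Finset.sum_congr rfl fun k _ => ?_
    rw [← mul_add]
    congr 1
    have hs : Real.sqrt (2 / (N + 1)) * Real.sqrt (2 / (N + 1)) = 2 / (N + 1) :=
      Real.mul_self_sqrt (by positivity)
    set A := ((m.1 : ℝ) + 1) * (k.1 + 1) * π / (N + 1) with hA
    set B := ((n.1 : ℝ) + 1) * (k.1 + 1) * π / (N + 1) with hB
    have h1 : ((m.1 : ℝ) - n.1) * (k.1 + 1) * π / (N + 1) = A - B := by
      rw [hA, hB]; ring
    have h2 : (((m.1 : ℝ) + 1) + ((n.1 : ℝ) + 1)) * (k.1 + 1) * π / (N + 1) = A + B := by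
      rw [hA, hB]; ring
    calc Real.sqrt (2 / (N + 1)) * Real.sin A * (Real.sqrt (2 / (N + 1)) * Real.sin B)
        = (2 / (N + 1)) * (Real.sin A * Real.sin B) := by
          rw [show Real.sqrt (2 / (N + 1)) * Real.sin A * (Real.sqrt (2 / (N + 1)) * Real.sin B)
            = (Real.sqrt (2 / (N + 1)) * Real.sqrt (2 / (N + 1))) * (Real.sin A * Real.sin B) from by
              ring, hs]
      _ = 1 / (N + 1) * Real.cos (((m.1 : ℝ) - n.1) * (k.1 + 1) * π / (N + 1)) +
          -(1 / (N + 1)) * Real.cos ((((m.1 : ℝ) + 1) + ((n.1 : ℝ) + 1)) * (k.1 + 1) * π / (N + 1)) := by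
          rw [h1, h2, Real.cos_sub, Real.cos_add]; ring
end

section
/- Toeplitz-plus-Hankel decomposition of the wave solution: let N be a positive integer, Δx > 0, u_0 ∈ ℝ^N, and t ∈ ℝ. Define the full wave u(t) = Σ_{k=1}^N cos((t/Δx)·√λ_k) (v_k · u_0) v_k, the Toeplitz wave T(t) = Σ_{k=1}^N cos((t/Δx)·√λ_k) T_k u_0, and the Hankel wave H(t) = Σ_{k=1}^N cos((t/Δx)·√λ_k) H_k u_0. Then u(t) = T(t) + H(t). -/
open Real Matrix

/-- Toeplitz-plus-Hankel decomposition of the wave solution: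
u(t) = Σ_k cos((t/Δx)√λ_k)(v_k·u_0) v_k equals the sum of the Toeplitz wave
T(t) = Σ_k cos((t/Δx)√λ_k) T_k u_0 and the Hankel wave
H(t) = Σ_k cos((t/Δx)√λ_k) H_k u_0. -/
theorem stmt19 (N : ℕ) (hN : 0 < N) (Δx : ℝ) (hΔx : 0 < Δx) (u0 : Fin N → ℝ) (t : ℝ) :
    (∑ k : Fin N, (Real.cos (t / Δx * Real.sqrt (lam N k)) * (vvec N k ⬝ᵥ u0)) • vvec N k)
      = (∑ k : Fin N, Real.cos (t / Δx * Real.sqrt (lam N k)) • (Tmat N k).mulVec u0)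
        + ∑ k : Fin N, Real.cos (t / Δx * Real.sqrt (lam N k)) • (Hmat N k).mulVec u0 := by

  rw [← Finset.sum_add_distrib]
  refine Finset.sum_congr rfl fun k _ => ?_
  rw [← smul_add]
  rw [mul_smul]
  congr 1
  funext m
  simp only [Pi.add_apply, Pi.smul_apply, smul_eq_mul, mulVec, dotProduct, vvec]
  rw [← Finset.sum_add_distrib, Finset.sum_mul]
  refine Finset.sum_congr rfl fun n _ => ?_
  have key : vvec N k m * vvec N k n = Tmat N k m n + Hmat N k m n := by
    have h2 : Real.sqrt (2 / (N + 1)) * Real.sqrt (2 / (N + 1)) = 2 / (N + 1) := by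
      rw [Real.mul_self_sqrt]
      positivity
    simp only [vvec, Tmat, Hmat]
    rw [show Real.sqrt (2 / (N + 1)) * Real.sin ((m.1 + 1) * (k.1 + 1) * π / (N + 1)) *
        (Real.sqrt (2 / (N + 1)) * Real.sin ((n.1 + 1) * (k.1 + 1) * π / (N + 1)))
      = (Real.sqrt (2 / (N + 1)) * Real.sqrt (2 / (N + 1))) *
        (Real.sin ((m.1 + 1) * (k.1 + 1) * π / (N + 1)) *
         Real.sin ((n.1 + 1) * (k.1 + 1) * π / (N + 1))) by ring, h2]
    have psum : ∀ a b : ℝ, Real.sin a * Real.sin b = (Real.cos (a - b) - Real.cos (a + b)) / 2 := by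
      intro a b
      have := Real.cos_sub a b
      have := Real.cos_add a b
      nlinarith [Real.cos_sub a b, Real.cos_add a b]
    rw [psum]
    have e1 : ((m.1 : ℝ) + 1) * (k.1 + 1) * π / (N + 1) - ((n.1 : ℝ) + 1) * (k.1 + 1) * π / (N + 1)
      = ((m.1 : ℝ) - (n.1 : ℝ)) * (k.1 + 1) * π / (N + 1) := by ring
    have e2 : ((m.1 : ℝ) + 1) * (k.1 + 1) * π / (N + 1) + ((n.1 : ℝ) + 1) * (k.1 + 1) * π / (N + 1)
      = (((m.1 : ℝ) + 1) + ((n.1 : ℝ) + 1)) * (k.1 + 1) * π / (N + 1) := by ring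
    rw [e1, e2]
    ring
  calc Real.sqrt (2 / (↑N + 1)) * Real.sin ((↑↑n + 1) * (↑↑k + 1) * π / (↑N + 1)) * u0 n *
        (Real.sqrt (2 / (↑N + 1)) * Real.sin ((↑↑m + 1) * (↑↑k + 1) * π / (↑N + 1)))
      = (vvec N k m * vvec N k n) * u0 n := by simp [vvec]; ring
    _ = (Tmat N k m n + Hmat N k m n) * u0 n := by rw [key]
    _ = Tmat N k m n * u0 n + Hmat N k m n * u0 n := by ring
end
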